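/- Under the unweighted K-NN classification utility with sorted training points, the Shapley values admit the closed form: for every i with K ≤ i ≤ N, s_i = 1[y_i = y_test]/i − ∑_{j=i+1}^{N} 1[y_j = y_test]/(j(j−1)); and for every i with 1 ≤ i ≤ K−1, s_i = 1[y_i = y_test]/K − ∑_{j=K+1}^{N} 1[y_j = y_test]/(j(j−1)). -/

import Mathlib

open Finset

/-- The Shapley value of player `i` in the cooperative game with player set `P`
and utility function `ν`. -/
noncomputable def shapley (P : Finset ℕ) (ν : Finset ℕ → ℝ) (i : ℕ) : ℝ :=
  (1 / (P.card : ℝ)) * ∑ S ∈ (P.erase i).powerset,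
    (1 / ((P.card - 1).choose S.card : ℝ)) * (ν (insert i S) - ν S)

/-- The unweighted K-NN classification utility: training points are sorted by
increasing distance to the test point, so the k-th nearest neighbor within `S`
is the k-th smallest element of `S` (given by the sorted list of `S`). -/
noncomputable def knnUtil (K : ℕ) (y : ℕ → ℕ) (ytest : ℕ) (S : Finset ℕ) : ℝ :=
  (1 / (K : ℝ)) * ∑ k ∈ Finset.range (min K S.card),
    if y ((S.sort (· ≤ ·)).getD k 0) = ytest then (1 : ℝ) else 0

/-!
Compare the Shapley values of adjacent points `i` and `i + 1`. A coalition `T` containing neither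
contributes `ν (T ∪ {i}) - ν (T ∪ {i + 1})`, which is `(1[y i = ytest] - 1[y (i + 1) = ytest]) / K`
when fewer than `K` points of `T` precede `i`, and `0` otherwise. The Shapley weights are the law
of the set of predecessors of a player in a uniformly random order; forgetting the points after
`i + 1`, the total weight of those `T` is the probability that `i` comes among the first `K` of
`{1, …, i}`, i.e. `min K i / i`. Hence
`s i - s (i + 1) = (1[y i = ytest] - 1[y (i + 1) = ytest]) * min K i / (K * i)`,
the same count gives `s N = 1[y N = ytest] / N`, and the closed form follows by downward induction.
-/

open scoped Nat

/-- In a uniformly random order of `n + 1` players, the probability that the predecessors of a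
given player form a given `k`-set of the other `n` players. -/
noncomputable def shapleyWeight (n k : ℕ) : ℝ := (k ! * (n - k)! : ℝ) / (n + 1)!

lemma shapleyWeight_eq_one_div_choose {n k : ℕ} (hk : k ≤ n) :
    shapleyWeight n k = 1 / (n + 1) * (1 / n.choose k) := by
  have hchoose : (n.choose k : ℝ) * k ! * (n - k)! = n ! := by
    exact_mod_cast Nat.choose_mul_factorial_mul_factorial hk
  have hne : (n.choose k : ℝ) ≠ 0 := by exact_mod_cast (Nat.choose_pos hk).ne'
  rw [shapleyWeight, Nat.factorial_succ]
  push_cast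
  rw [← hchoose]
  field_simp

lemma shapleyWeight_add_shapleyWeight_succ {n k : ℕ} (hk : k ≤ n) :
    shapleyWeight (n + 1) k + shapleyWeight (n + 1) (k + 1) = shapleyWeight n k := by
  have e : n + 1 - k = (n - k) + 1 := by omega
  simp only [shapleyWeight, e, Nat.add_sub_add_right, Nat.factorial_succ]
  push_cast [Nat.cast_sub hk]
  field_simp
  ring

lemma choose_mul_shapleyWeight {n k : ℕ} (hk : k ≤ n) :
    n.choose k * shapleyWeight n k = 1 / (n + 1) := by
  have hne : (n.choose k : ℝ) ≠ 0 := by exact_mod_cast (Nat.choose_pos hk).ne'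
  rw [shapleyWeight_eq_one_div_choose hk]
  field_simp

lemma shapley_eq_sum_shapleyWeight (P : Finset ℕ) (ν : Finset ℕ → ℝ) {i : ℕ} (hi : i ∈ P) :
    shapley P ν i =
      ∑ S ∈ (P.erase i).powerset, shapleyWeight (#P - 1) #S * (ν (insert i S) - ν S) := by
  have hP : (#P : ℝ) = (#P - 1 : ℕ) + 1 := by
    rw [Nat.cast_sub (card_pos.mpr ⟨i, hi⟩)]; ring
  rw [shapley, mul_sum]
  refine sum_congr rfl fun S hS => ?_
  have hS : #S ≤ #P - 1 := card_erase_of_mem hi ▸ card_le_card (mem_powerset.mp hS)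
  rw [shapleyWeight_eq_one_div_choose hS, hP, mul_assoc]

lemma shapley_sub_shapley (P : Finset ℕ) (ν : Finset ℕ → ℝ) {i j : ℕ} (hi : i ∈ P) (hj : j ∈ P)
    (hij : i ≠ j) :
    shapley P ν i - shapley P ν j =
      ∑ T ∈ ((P.erase i).erase j).powerset,
        shapleyWeight (#P - 2) #T * (ν (insert i T) - ν (insert j T)) := by
  set Q := (P.erase i).erase j with hQdef
  have hiQ : i ∉ Q := fun h => notMem_erase i P (mem_of_mem_erase h)
  have hjQ : j ∉ Q := notMem_erase j _
  have hPi : P.erase i = insert j Q := (insert_erase (mem_erase.mpr ⟨hij.symm, hj⟩)).symm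
  have hPj : P.erase j = insert i Q := by
    rw [hQdef, erase_right_comm, insert_erase (mem_erase.mpr ⟨hij, hi⟩)]
  have hQ : #Q = #P - 2 := by
    rw [card_erase_of_mem (mem_erase.mpr ⟨hij.symm, hj⟩), card_erase_of_mem hi]; omega
  have hP : #P - 1 = #P - 2 + 1 := by
    have := one_lt_card.mpr ⟨i, hi, j, hj, hij⟩
    omega
  rw [shapley_eq_sum_shapleyWeight P ν hi, shapley_eq_sum_shapleyWeight P ν hj, hPi, hPj,
    sum_powerset_insert hjQ, sum_powerset_insert hiQ, ← sum_add_distrib, ← sum_add_distrib,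
    ← sum_sub_distrib]
  refine sum_congr rfl fun T hT => ?_
  have hTQ := mem_powerset.mp hT
  have hiT : i ∉ T := fun h => hiQ (hTQ h)
  have hjT : j ∉ T := fun h => hjQ (hTQ h)
  have hTcard : #T ≤ #P - 2 := hQ ▸ card_le_card hTQ
  rw [card_insert_of_notMem hiT, card_insert_of_notMem hjT, insert_comm, hP,
    ← shapleyWeight_add_shapleyWeight_succ hTcard]
  ring

lemma sum_powerset_union_shapleyWeight_inter {α : Type*} [DecidableEq α] (A B : Finset α)
    (hAB : Disjoint A B) (g : Finset α → ℝ) :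
    ∑ T ∈ (A ∪ B).powerset, shapleyWeight #(A ∪ B) #T * g (T ∩ A) =
      ∑ U ∈ A.powerset, shapleyWeight #A #U * g U := by
  induction B using Finset.induction_on with
  | empty =>
    rw [union_empty]
    exact sum_congr rfl fun T hT => by rw [inter_eq_left.mpr (mem_powerset.mp hT)]
  | insert b B hb ih =>
    have hbA : b ∉ A := disjoint_right.mp hAB (mem_insert_self b B)
    have hbAB : b ∉ A ∪ B := by simp [hb, hbA]
    rw [union_insert, sum_powerset_insert hbAB, card_insert_of_notMem hbAB, ← sum_add_distrib,
      ← ih (disjoint_of_subset_right (subset_insert b B) hAB)]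
    refine sum_congr rfl fun T hT => ?_
    have hbT : b ∉ T := fun h => hbAB (mem_powerset.mp hT h)
    rw [card_insert_of_notMem hbT, insert_inter_of_notMem hbA, ← add_mul,
      shapleyWeight_add_shapleyWeight_succ (card_le_card (mem_powerset.mp hT))]

lemma sum_powerset_shapleyWeight_filter {α : Type*} [DecidableEq α] (Q : Finset α)
    (p : α → Prop) [DecidablePred p] (g : Finset α → ℝ) :
    ∑ T ∈ Q.powerset, shapleyWeight #Q #T * g {x ∈ T | p x} =
      ∑ U ∈ {x ∈ Q | p x}.powerset, shapleyWeight #{x ∈ Q | p x} #U * g U := by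
  rw [← sum_powerset_union_shapleyWeight_inter _ _ (disjoint_filter_filter_not Q Q p),
    filter_union_filter_not_eq]
  refine sum_congr rfl fun T hT => ?_
  rw [inter_filter, inter_eq_left.mpr (mem_powerset.mp hT)]

lemma sum_powerset_shapleyWeight_ite_card_lt {α : Type*} (A : Finset α) (K : ℕ) (c : ℝ) :
    ∑ U ∈ A.powerset, shapleyWeight #A #U * (if #U < K then c else 0) =
      c * min K (#A + 1) / (#A + 1) := by
  rw [sum_powerset_apply_card (fun k => shapleyWeight #A k * if k < K then c else 0)]
  have hterm : ∀ k ∈ range (#A + 1),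
      (#A).choose k • (shapleyWeight #A k * if k < K then c else 0) =
        if k < K then c / (#A + 1) else 0 := by
    intro k hk
    rw [nsmul_eq_mul, ← mul_assoc,
      choose_mul_shapleyWeight (Nat.lt_succ_iff.mp (mem_range.mp hk))]
    split_ifs <;> ring
  rw [sum_congr rfl hterm, ← sum_filter, sum_const, nsmul_eq_mul]
  have hfilter : {k ∈ range (#A + 1) | k < K} = range (min K (#A + 1)) := by
    ext k; simp only [mem_filter, mem_range, lt_min_iff]; tauto
  rw [hfilter, card_range]
  ring

lemma getD_sort_eq_nth (S : Finset ℕ) (k : ℕ) :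
    (S.sort (· ≤ ·)).getD k 0 = Nat.nth (· ∈ S) k := by
  rw [Nat.nth_eq_getD_sort (p := (· ∈ S)) S.finite_toSet, Finset.finite_toSet_toFinset]

lemma count_mem_eq_card_filter_lt (S : Finset ℕ) (j : ℕ) :
    Nat.count (· ∈ S) j = #{x ∈ S | x < j} := by
  rw [Nat.count_eq_card_filter_range]
  congr 1
  ext x
  simp [and_comm]

lemma sum_range_min_card_getD_sort {M : Type*} [AddCommMonoid M] (S : Finset ℕ) (K : ℕ)
    (f : ℕ → M) :
    ∑ k ∈ range (min K #S), f ((S.sort (· ≤ ·)).getD k 0) =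
      ∑ j ∈ S with #{x ∈ S | x < j} < K, f j := by
  have hf : (Set.ofPred (· ∈ S)).Finite := S.finite_toSet
  have hcard : #hf.toFinset = #S := by rw [S.finite_toSet_toFinset]
  simp only [getD_sort_eq_nth, ← count_mem_eq_card_filter_lt]
  refine sum_nbij' (Nat.nth (· ∈ S)) (Nat.count (· ∈ S)) ?_ ?_ ?_ ?_ (fun _ _ => rfl)
  · intro k hk
    rw [mem_range, lt_min_iff, ← hcard] at hk
    rw [mem_filter, Nat.count_nth_of_lt_card_finite hf hk.2]
    exact ⟨Nat.nth_mem_of_lt_card hf hk.2, hk.1⟩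
  · intro j hj
    rw [mem_filter] at hj
    rw [mem_range, lt_min_iff, ← hcard]
    exact ⟨hj.2, Nat.count_lt_card hf hj.1⟩
  · intro k hk
    rw [mem_range, lt_min_iff, ← hcard] at hk
    exact Nat.count_nth_of_lt_card_finite hf hk.2
  · intro j hj
    exact Nat.nth_count (mem_filter.mp hj).1

lemma eq_of_sub_succ_eq_sub_succ {s f : ℕ → ℝ} {a n : ℕ} (hn : s n = f n)
    (hstep : ∀ i, a ≤ i → i < n → s i - s (i + 1) = f i - f (i + 1)) {i : ℕ} (hai : a ≤ i)
    (hin : i ≤ n) : s i = f i := by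
  induction hin using Nat.decreasingInduction with
  | self => exact hn
  | of_succ k hkn ih => linarith [hstep k hai hkn, ih (by omega)]

section KNN

variable (K : ℕ) (y : ℕ → ℕ) (ytest : ℕ)

noncomputable def labelMatch (j : ℕ) : ℝ := if y j = ytest then 1 else 0

lemma knnUtil_eq_sum_ite_card_filter_lt (S : Finset ℕ) :
    knnUtil K y ytest S =
      1 / K * ∑ j ∈ S, if #{x ∈ S | x < j} < K then labelMatch y ytest j else 0 := by
  rw [← sum_filter, ← sum_range_min_card_getD_sort]
  rfl

lemma card_filter_lt_insert {a : ℕ} {T : Finset ℕ} (ha : a ∉ T) (j : ℕ) :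
    #{x ∈ insert a T | x < j} = #{x ∈ T | x < j} + if a < j then 1 else 0 := by
  rw [filter_insert]
  split_ifs
  · exact card_insert_of_notMem fun h => ha (mem_filter.mp h).1
  · rfl

lemma knnUtil_insert_sub_knnUtil_insert_succ {i : ℕ} {T : Finset ℕ} (hi : i ∉ T)
    (hi1 : i + 1 ∉ T) :
    knnUtil K y ytest (insert i T) - knnUtil K y ytest (insert (i + 1) T) =
      1 / K * if #{x ∈ T | x < i} < K
        then labelMatch y ytest i - labelMatch y ytest (i + 1) else 0 := by
  have hrank : ∀ j ∈ T, #{x ∈ insert i T | x < j} = #{x ∈ insert (i + 1) T | x < j} := by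
    intro j hj
    have : i < j ↔ i + 1 < j := by grind
    simp only [card_filter_lt_insert hi, card_filter_lt_insert hi1, this]
  have hrank_succ : #{x ∈ T | x < i + 1} = #{x ∈ T | x < i} :=
    congrArg card <| filter_congr fun x hx => by grind
  rw [knnUtil_eq_sum_ite_card_filter_lt, knnUtil_eq_sum_ite_card_filter_lt, sum_insert hi,
    sum_insert hi1, sum_congr rfl fun j hj => by rw [hrank j hj]]
  simp only [card_filter_lt_insert hi, card_filter_lt_insert hi1, lt_self_iff_false, if_false,
    add_zero, hrank_succ]
  split_ifs <;> ring

lemma knnUtil_insert_sub_knnUtil_of_forall_lt {n : ℕ} {S : Finset ℕ} (hS : ∀ x ∈ S, x < n) :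
    knnUtil K y ytest (insert n S) - knnUtil K y ytest S =
      1 / K * if #S < K then labelMatch y ytest n else 0 := by
  have hn : n ∉ S := fun h => lt_irrefl n (hS n h)
  have hrank : ∀ j ∈ S, #{x ∈ insert n S | x < j} = #{x ∈ S | x < j} := fun j hj => by
    rw [card_filter_lt_insert hn, if_neg (hS j hj).not_gt, add_zero]
  rw [knnUtil_eq_sum_ite_card_filter_lt, knnUtil_eq_sum_ite_card_filter_lt, sum_insert hn,
    sum_congr rfl fun j hj => by rw [hrank j hj]]
  simp only [card_filter_lt_insert hn, lt_self_iff_false, if_false, add_zero,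
    filter_true_of_mem hS]
  ring

lemma shapley_knnUtil_sub_shapley_knnUtil_succ {N i : ℕ} (hi : 1 ≤ i) (hiN : i < N) :
    shapley (Icc 1 N) (knnUtil K y ytest) i - shapley (Icc 1 N) (knnUtil K y ytest) (i + 1) =
      (labelMatch y ytest i - labelMatch y ytest (i + 1)) * min K i / (K * i) := by
  have hiP : i ∈ Icc 1 N := mem_Icc.mpr ⟨hi, hiN.le⟩
  have hi1Q : i + 1 ∈ (Icc 1 N).erase i := mem_erase.mpr ⟨by omega, mem_Icc.mpr ⟨by omega, hiN⟩⟩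
  set Q := ((Icc 1 N).erase i).erase (i + 1) with hQdef
  have hQ : #(Icc 1 N) - 2 = #Q := by
    rw [hQdef, card_erase_of_mem hi1Q, card_erase_of_mem hiP]; omega
  have hQi : {x ∈ Q | x < i} = Icc 1 (i - 1) := by
    ext x; simp only [hQdef, mem_filter, mem_erase, mem_Icc]; omega
  set d := labelMatch y ytest i - labelMatch y ytest (i + 1)
  have hmarg : ∀ T ∈ Q.powerset,
      shapleyWeight (#(Icc 1 N) - 2) #T *
          (knnUtil K y ytest (insert i T) - knnUtil K y ytest (insert (i + 1) T)) =
        shapleyWeight #Q #T * if #{x ∈ T | x < i} < K then d / K else 0 := by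
    intro T hT
    have hTQ := mem_powerset.mp hT
    rw [knnUtil_insert_sub_knnUtil_insert_succ K y ytest
      (fun h => notMem_erase i _ (mem_of_mem_erase (hTQ h))) (fun h => notMem_erase _ _ (hTQ h)),
      hQ, mul_ite, mul_zero, one_div_mul_eq_div]
  rw [shapley_sub_shapley _ _ hiP (mem_of_mem_erase hi1Q) (by omega), sum_congr rfl hmarg,
    sum_powerset_shapleyWeight_filter Q (· < i)
      (fun U => if #U < K then d / K else 0),
    hQi, sum_powerset_shapleyWeight_ite_card_lt, Nat.card_Icc, Nat.add_sub_cancel,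
    Nat.sub_add_cancel hi]
  push_cast [Nat.cast_sub hi]
  ring

lemma shapley_knnUtil_self {N : ℕ} (hN : 1 ≤ N) :
    shapley (Icc 1 N) (knnUtil K y ytest) N = labelMatch y ytest N * min K N / (K * N) := by
  have hNP : N ∈ Icc 1 N := mem_Icc.mpr ⟨hN, le_rfl⟩
  have herase : (Icc 1 N).erase N = Icc 1 (N - 1) := by
    ext x; simp only [mem_erase, mem_Icc]; omega
  have hmarg : ∀ S ∈ (Icc 1 (N - 1)).powerset,
      shapleyWeight #(Icc 1 (N - 1)) #S * (knnUtil K y ytest (insert N S) - knnUtil K y ytest S) =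
        shapleyWeight #(Icc 1 (N - 1)) #S * if #S < K then labelMatch y ytest N / K else 0 := by
    intro S hS
    have hSN : ∀ x ∈ S, x < N := fun x hx => by
      have := mem_Icc.mp (mem_powerset.mp hS hx); omega
    rw [knnUtil_insert_sub_knnUtil_of_forall_lt K y ytest hSN, mul_ite, mul_zero,
      one_div_mul_eq_div]
  rw [shapley_eq_sum_shapleyWeight _ _ hNP, ← card_erase_of_mem hNP, herase,
    sum_congr rfl hmarg, sum_powerset_shapleyWeight_ite_card_lt, Nat.card_Icc,
    Nat.add_sub_cancel, Nat.sub_add_cancel hN]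
  push_cast [Nat.cast_sub hN]
  ring

lemma shapley_knnUtil_of_le {N : ℕ} (hK : 1 ≤ K) (hKN : K ≤ N) {i : ℕ} (hKi : K ≤ i) (hiN : i ≤ N) :
    shapley (Icc 1 N) (knnUtil K y ytest) i =
      labelMatch y ytest i / i - ∑ j ∈ Icc (i + 1) N, labelMatch y ytest j / (j * (j - 1)) := by
  refine eq_of_sub_succ_eq_sub_succ (s := shapley (Icc 1 N) (knnUtil K y ytest))
    (f := fun i => labelMatch y ytest i / i -
      ∑ j ∈ Icc (i + 1) N, labelMatch y ytest j / (j * (j - 1))) ?_ (fun k hKk hkN => ?_) hKi hiN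
  · rw [shapley_knnUtil_self K y ytest (hK.trans hKN), min_eq_left hKN,
      Icc_eq_empty_of_lt (Nat.lt_succ_self N), sum_empty, sub_zero]
    field_simp
  · have hk : (k : ℝ) ≠ 0 := Nat.cast_ne_zero.mpr (by omega)
    rw [shapley_knnUtil_sub_shapley_knnUtil_succ K y ytest (by omega) hkN, min_eq_left hKk,
      ← insert_Icc_add_one_left_eq_Icc (by omega : k + 1 ≤ N), sum_insert (by simp)]
    push_cast [add_sub_cancel_right]
    field_simp
    ring

lemma shapley_knnUtil_of_lt {N : ℕ} (hK : 1 ≤ K) (hKN : K ≤ N) {i : ℕ} (hi : 1 ≤ i) (hiK : i < K) :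
    shapley (Icc 1 N) (knnUtil K y ytest) i =
      labelMatch y ytest i / K - ∑ j ∈ Icc (K + 1) N, labelMatch y ytest j / (j * (j - 1)) := by
  refine eq_of_sub_succ_eq_sub_succ (s := shapley (Icc 1 N) (knnUtil K y ytest))
    (f := fun i => labelMatch y ytest i / K -
      ∑ j ∈ Icc (K + 1) N, labelMatch y ytest j / (j * (j - 1)))
    (shapley_knnUtil_of_le K y ytest hK hKN le_rfl hKN) (fun k hk hkK => ?_) hi hiK.le
  rw [shapley_knnUtil_sub_shapley_knnUtil_succ K y ytest hk (by omega), min_eq_right hkK.le]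
  field_simp
  ring

end KNN

/-- Closed form for the Shapley values of the unweighted K-NN classifier. -/
theorem knn_shapley_closed_form (N K : ℕ) (hK1 : 1 ≤ K) (hKN : K ≤ N)
    (y : ℕ → ℕ) (ytest : ℕ) :
    (∀ i, K ≤ i → i ≤ N →
      shapley (Finset.Icc 1 N) (knnUtil K y ytest) i =
        (if y i = ytest then (1 : ℝ) else 0) / i -
          ∑ j ∈ Finset.Icc (i + 1) N,
            (if y j = ytest then (1 : ℝ) else 0) / ((j : ℝ) * ((j : ℝ) - 1))) ∧
    (∀ i, 1 ≤ i → i ≤ K - 1 →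
      shapley (Finset.Icc 1 N) (knnUtil K y ytest) i =
        (if y i = ytest then (1 : ℝ) else 0) / K -
          ∑ j ∈ Finset.Icc (K + 1) N,
            (if y j = ytest then (1 : ℝ) else 0) / ((j : ℝ) * ((j : ℝ) - 1))) :=
  ⟨fun _ hKi hiN => shapley_knnUtil_of_le K y ytest hK1 hKN hKi hiN,
    fun _ hi hiK => shapley_knnUtil_of_lt K y ytest hK1 hKN hi (by omega)⟩
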